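/- arXiv:1803.05141 — 2 statements merged into one kernel-verified Lean document; each statement's English description precedes it below -/
import Mathlib

section
/- For every natural number n ≥ 1, φ(B_n) ≥ B_{φ(n)}, where φ is Euler's totient function and B is the balancing sequence. -/
/-!
Since `B (k + 1) ≥ 5 * B k`, we have `5 ^ (n - φ n) * B (φ n) ≤ B n`, so it suffices to show
`B n ≤ 5 ^ (n - φ n) * φ (B n)`. Now `m / φ m = ∏ p / (p - 1)` over the primes `p ∣ m`, and
Bernoulli's inequality gives `(p / (p - 1)) ^ e ≤ p` for `p > e`; hence `(m / φ m) ^ e ≤ m ≤ 6 ^ n`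
for `m = B n` when every prime factor of `m` exceeds `e`.

`B k` is the `y`-coordinate of `(3 + √8) ^ k`. For odd `n`, a prime `q ∣ B n` is odd, and the
Frobenius of `ℤ[√8] / q` shows that `q` divides `B (q - 1)` or `B (q + 1)`. The Pell solutions with
`q ∣ y` form a subgroup, so `q ∣ B (gcd n (q ∓ 1))`; this gcd is an odd divisor `> 1` of `n`
dividing the even number `q ∓ 1`, whence `q ≥ 2 p - 1` for the least prime factor `p` of `n`.
Take `e = 2 p - 2` and use `n - φ n ≥ n / p`. For even `n`, `n - φ n ≥ n / 2` and `e = 4`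
suffice, the primes `2` and `3` costing only a bounded factor.
-/

def B : ℕ → ℕ
  | 0 => 0
  | 1 => 1
  | (n + 2) => 6 * B (n + 1) - B n

open scoped Nat

namespace Nat

theorem pow_pred_le_sub_one_pow {p e : ℕ} (h : e < p) : p ^ (e - 1) ≤ (p - 1) ^ e := by
  rcases e with _ | e
  · simp
  have hb := pow_add_mul_le_add_pow (R := ℤ) (a := p) (b := -1) (by positivity) (by omega) (e + 1)
  zify [show 1 ≤ p by omega]
  simp only [add_tsub_cancel_right, Nat.cast_add, Nat.cast_one, ← sub_eq_add_neg] at hb ⊢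
  have hpe : (e + 2 : ℤ) ≤ p := by exact_mod_cast h
  nlinarith [pow_pos (show (0 : ℤ) < p by omega) e, pow_succ (p : ℤ) e]

theorem totient_mul_le_mul_sub_one {n p : ℕ} (hp : p.Prime) (hpn : p ∣ n) :
    φ n * p ≤ n * (p - 1) := by
  rcases eq_or_ne n 0 with rfl | hn
  · simp
  have hmem : p ∈ n.primeFactors := mem_primeFactors.mpr ⟨hp, hpn, hn⟩
  have hfactor : ∀ q ∈ n.primeFactors, (0 : ℚ) ≤ 1 - (q : ℚ)⁻¹ := fun q hq =>
    sub_nonneg.mpr <| inv_le_one_of_one_le₀ <| by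
      exact_mod_cast (prime_of_mem_primeFactors hq).one_le
  have hle : (φ n : ℚ) ≤ n * (1 - (p : ℚ)⁻¹) := by
    rw [totient_eq_mul_prod_factors, ← Finset.mul_prod_erase _ _ hmem, ← mul_assoc]
    exact mul_le_of_le_one_right (mul_nonneg n.cast_nonneg (hfactor p hmem))
      (Finset.prod_le_one (fun q hq => hfactor q (Finset.mem_of_mem_erase hq))
        fun q _ => sub_le_self _ (by positivity))
  have hp0 : (p : ℚ) ≠ 0 := by exact_mod_cast hp.ne_zero
  rw [← Nat.cast_le (α := ℚ)]
  push_cast [hp.one_le]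
  calc (φ n : ℚ) * p ≤ n * (1 - (p : ℚ)⁻¹) * p := by gcongr
    _ = n * (p - 1) := by field_simp

theorem pow_le_totient_pow_mul {m : ℕ} (hm : m ≠ 0) (e : ℕ) :
    m ^ e ≤ φ m ^ e * m * (∏ p ∈ m.primeFactors with p ≤ e, p) ^ (e - 1) := by
  set P := ∏ p ∈ m.primeFactors, p
  set Q := ∏ p ∈ m.primeFactors, (p - 1)
  set S := ∏ p ∈ m.primeFactors with p ≤ e, p
  have hP : 0 < P := Finset.prod_pos fun p hp => (prime_of_mem_primeFactors hp).pos
  have hQ : 0 < Q := Finset.prod_pos fun p hp => by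
    have := (prime_of_mem_primeFactors hp).two_le; omega
  have hPm : P ≤ m := le_of_dvd (pos_of_ne_zero hm) (prod_primeFactors_dvd m)
  have hrad : P ^ (e - 1) ≤ Q ^ e * S ^ (e - 1) := by
    simp only [P, Q, S]
    rw [Finset.prod_filter, ← Finset.prod_pow, ← Finset.prod_pow, ← Finset.prod_pow,
      ← Finset.prod_mul_distrib]
    refine Finset.prod_le_prod' fun p hp => ?_
    have hp2 := (prime_of_mem_primeFactors hp).two_le
    split_ifs with hpe
    · exact le_mul_of_one_le_left' (Nat.one_le_pow _ _ (by omega))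
    · simpa using pow_pred_le_sub_one_pow (not_le.mp hpe)
  refine le_of_mul_le_mul_right ?_ (pow_pos hQ e)
  calc m ^ e * Q ^ e = φ m ^ e * P ^ e := by
        rw [← mul_pow, ← mul_pow, totient_mul_prod_primeFactors]
    _ ≤ φ m ^ e * (P * P ^ (e - 1)) := by
        rw [← pow_succ']; gcongr; omega
    _ ≤ φ m ^ e * (m * (Q ^ e * S ^ (e - 1))) := by gcongr
    _ = φ m ^ e * m * S ^ (e - 1) * Q ^ e := by ring

theorem pow_le_totient_pow_mul_primorial {m : ℕ} (hm : m ≠ 0) (e : ℕ) :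
    m ^ e ≤ φ m ^ e * m * primorial e ^ (e - 1) := by
  refine (pow_le_totient_pow_mul hm e).trans ?_
  gcongr
  refine Finset.prod_le_prod_of_subset_of_one_le' (fun p hp => ?_)
    fun p hp _ => (Finset.mem_filter.mp hp).2.one_le
  simp only [Finset.mem_filter, mem_primeFactors, Finset.mem_range] at hp ⊢
  exact ⟨by omega, hp.1.1⟩

end Nat

namespace Pell.Solution₁

variable {d : ℤ}

def yDvdSubgroup (d m : ℤ) : Subgroup (Solution₁ d) where
  carrier := {a | m ∣ a.y}
  mul_mem' {a b} ha hb := by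
    rw [Set.mem_ofPred_eq, y_mul]
    exact dvd_add (dvd_mul_of_dvd_right hb _) (dvd_mul_of_dvd_left ha _)
  one_mem' := by simp [y_one]
  inv_mem' {a} ha := by simpa [y_inv] using ha

theorem dvd_y_pow_gcd {m : ℤ} (a : Solution₁ d) {k l : ℕ} (hk : m ∣ (a ^ k).y)
    (hl : m ∣ (a ^ l).y) : m ∣ (a ^ k.gcd l).y := by
  have : a ^ k.gcd l = (a ^ k) ^ k.gcdA l * (a ^ l) ^ k.gcdB l := by
    rw [← zpow_natCast, Nat.gcd_eq_gcd_ab, zpow_add, zpow_mul, zpow_mul, zpow_natCast,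
      zpow_natCast]
  rw [this]
  exact (yDvdSubgroup d m).mul_mem (zpow_mem (show a ^ k ∈ yDvdSubgroup d m from hk) _)
    (zpow_mem (show a ^ l ∈ yDvdSubgroup d m from hl) _)

theorem cast_xy_pow_prime {q : ℕ} [Fact q.Prime] (hq : q ≠ 2) (a : Solution₁ d) :
    ((a ^ q).x : ZMod q) = a.x ∧ ((a ^ q).y : ZMod q) = a.y * (d : ZMod q) ^ (q / 2) := by
  -- `(x + y √d) ^ q = x ^ q + y ^ q d ^ (q / 2) √d + q * s`, then Fermat's little theorem
  obtain ⟨r, hr⟩ := exists_add_pow_prime_eq (Fact.out : q.Prime) (a.x : ℤ√d)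
    ((a.y : ℤ√d) * Zsqrtd.sqrtd)
  have ha : ((a ^ q : Solution₁ d) : ℤ√d) = ((a.x : ℤ√d) + (a.y : ℤ√d) * Zsqrtd.sqrtd) ^ q := by
    rw [show (a.x : ℤ√d) + (a.y : ℤ√d) * Zsqrtd.sqrtd = (a : ℤ√d) by
      ext <;> simp [Solution₁.x, Solution₁.y]]
    exact SubmonoidClass.coe_pow (S := unitary (ℤ√d)) a q
  have hsq : (Zsqrtd.sqrtd : ℤ√d) ^ q = (d : ℤ√d) ^ (q / 2) * Zsqrtd.sqrtd := by
    conv_lhs => rw [← Nat.two_mul_div_two_add_one_of_odd ((Fact.out : q.Prime).odd_of_ne_two hq)]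
    rw [pow_succ, pow_mul, sq, Zsqrtd.dmuld]
  set s := (a.x : ℤ√d) * ((a.y : ℤ√d) * Zsqrtd.sqrtd) * r
  have key : ((a ^ q : Solution₁ d) : ℤ√d) = ((a.x ^ q : ℤ) : ℤ√d) +
      ((a.y ^ q * d ^ (q / 2) : ℤ) : ℤ√d) * Zsqrtd.sqrtd + ((q : ℤ) : ℤ√d) * s := by
    rw [ha, hr, mul_pow, hsq]; push_cast; ring
  have hx : (a ^ q).x = a.x ^ q + q * s.re := by
    have h := congrArg Zsqrtd.re key
    simp only [Zsqrtd.re_add, Zsqrtd.re_mul, Zsqrtd.re_intCast, Zsqrtd.im_intCast,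
      Zsqrtd.re_sqrtd, Zsqrtd.im_sqrtd, mul_zero, zero_mul, add_zero] at h
    exact h
  have hy : (a ^ q).y = a.y ^ q * d ^ (q / 2) + q * s.im := by
    have h := congrArg Zsqrtd.im key
    simp only [Zsqrtd.im_add, Zsqrtd.im_mul, Zsqrtd.re_intCast, Zsqrtd.im_intCast,
      Zsqrtd.re_sqrtd, Zsqrtd.im_sqrtd, mul_zero, zero_mul, add_zero, mul_one, zero_add] at h
    exact h
  constructor
  · rw [hx]; push_cast; simp [ZMod.pow_card]
  · rw [hy]; push_cast; simp [ZMod.pow_card]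

theorem dvd_y_pow_sub_one_or_add_one {q : ℕ} (hq : q.Prime) (hq2 : q ≠ 2) (hd : ¬ (q : ℤ) ∣ d)
    (a : Solution₁ d) : (q : ℤ) ∣ (a ^ (q - 1)).y ∨ (q : ℤ) ∣ (a ^ (q + 1)).y := by
  have := Fact.mk hq
  simp only [← ZMod.intCast_zmod_eq_zero_iff_dvd]
  obtain ⟨hx, hy⟩ := cast_xy_pow_prime hq2 a
  set ε := (d : ZMod q) ^ (q / 2)
  have hε : ε * ε = 1 := by
    have : q / 2 + q / 2 = q - 1 := by have := hq.odd_of_ne_two hq2; grind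
    rw [← pow_add, this, ZMod.pow_card_sub_one_eq_one]
    rwa [ne_eq, ZMod.intCast_zmod_eq_zero_iff_dvd]
  -- the `y`-coordinates of `a ^ q * a⁻¹` and `a ^ q * a` are `x y (ε - 1)` and `x y (ε + 1)`
  rw [pow_sub a hq.one_le, pow_one, pow_succ, y_mul, y_mul, y_inv, x_inv]
  push_cast
  rw [hx, hy]
  rcases mul_self_eq_one_iff.mp hε with h | h
  · left; rw [h]; ring
  · right; rw [h]; ring

end Pell.Solution₁

theorem B_succ_succ (n : ℕ) : B (n + 2) = 6 * B (n + 1) - B n := rfl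

theorem five_mul_B_le (n : ℕ) : 5 * B n ≤ B (n + 1) := by
  induction n with
  | zero => simp [B]
  | succ n ih => rw [B_succ_succ]; omega

theorem five_pow_mul_B_le (a k : ℕ) : 5 ^ k * B a ≤ B (a + k) := by
  induction k with
  | zero => simp
  | succ k ih =>
    rw [pow_succ', mul_assoc]
    exact (Nat.mul_le_mul_left 5 ih).trans (five_mul_B_le _)

theorem B_pos {n : ℕ} (hn : n ≠ 0) : 0 < B n := by
  have := five_pow_mul_B_le 1 (n - 1)
  rw [Nat.add_sub_cancel' (Nat.one_le_iff_ne_zero.mpr hn)] at this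
  exact lt_of_lt_of_le (by simp [B]) this

theorem B_le_six_pow : ∀ n, B n ≤ 6 ^ n
  | 0 => by simp [B]
  | 1 => by simp [B]
  | n + 2 => by
    have := B_le_six_pow (n + 1)
    rw [B_succ_succ, pow_succ]
    omega

theorem B_mod_two : ∀ n, B n % 2 = n % 2
  | 0 => rfl
  | 1 => rfl
  | n + 2 => by
    have := B_mod_two n
    have := five_mul_B_le n
    have := five_mul_B_le (n + 1)
    rw [B_succ_succ]
    omega

def balancingUnit : Pell.Solution₁ 8 := .mk 3 1 (by norm_num)

theorem intCast_B : ∀ n, (B n : ℤ) = (balancingUnit ^ n).y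
  | 0 => rfl
  | 1 => by simp [B, balancingUnit]
  | n + 2 => by
    have h := five_mul_B_le n
    rw [B_succ_succ, Nat.cast_sub (by omega), Nat.cast_mul, intCast_B n, intCast_B (n + 1)]
    simp only [Nat.cast_ofNat, balancingUnit, pow_succ, Pell.Solution₁.y_mul,
      Pell.Solution₁.y_mk, mul_one, Pell.Solution₁.x_mk, Pell.Solution₁.x_mul]
    ring

theorem dvd_B_gcd {q m n : ℕ} (hm : q ∣ B m) (hn : q ∣ B n) : q ∣ B (m.gcd n) := by
  rw [← Int.natCast_dvd_natCast, intCast_B] at *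
  exact balancingUnit.dvd_y_pow_gcd hm hn

theorem dvd_B_sub_one_or_add_one {q : ℕ} (hq : q.Prime) (hq2 : q ≠ 2) :
    q ∣ B (q - 1) ∨ q ∣ B (q + 1) := by
  have h8 : ¬ (q : ℤ) ∣ 8 := by
    rw [show (8 : ℤ) = ((2 ^ 3 : ℕ) : ℤ) by norm_num, Int.natCast_dvd_natCast]
    exact fun h => hq2 ((Nat.prime_dvd_prime_iff_eq hq Nat.prime_two).mp (hq.dvd_of_dvd_pow h))
  simp only [← Int.natCast_dvd_natCast, intCast_B]
  exact balancingUnit.dvd_y_pow_sub_one_or_add_one hq hq2 h8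

theorem two_mul_minFac_le_of_dvd_B {n w q : ℕ} (hn : Odd n) (hw : Even w) (hw0 : w ≠ 0)
    (hq : q ≠ 1) (hqn : q ∣ B n) (hqw : q ∣ B w) : 2 * n.minFac ≤ w := by
  have hg : q ∣ B (n.gcd w) := dvd_B_gcd hqn hqw
  have hg1 : n.gcd w ≠ 1 := fun h => hq (Nat.dvd_one.mp (by simpa [h, B] using hg))
  have hg0 : n.gcd w ≠ 0 := Nat.gcd_ne_zero_right hw0
  have hgn : n.gcd w ∣ n := Nat.gcd_dvd_left n w
  have hmin : n.minFac ≤ n.gcd w := Nat.minFac_le_of_dvd (by omega) hgn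
  have h2g : 2 * n.gcd w ∣ w := Nat.Coprime.mul_dvd_of_dvd_of_dvd
    (Nat.coprime_two_left.mpr (hn.of_dvd_nat hgn)) hw.two_dvd (Nat.gcd_dvd_right n w)
  have := Nat.le_of_dvd (Nat.pos_of_ne_zero hw0) h2g
  omega

theorem two_mul_minFac_le_of_prime_dvd_B {n q : ℕ} (hn : Odd n) (hq : q.Prime)
    (hqn : q ∣ B n) : 2 * n.minFac ≤ q + 1 := by
  have hq2 : q ≠ 2 := by
    rintro rfl
    have := B_mod_two n
    have := Nat.odd_iff.mp hn
    omega
  have hq_odd := hq.odd_of_ne_two hq2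
  have := hq.two_le
  rcases dvd_B_sub_one_or_add_one hq hq2 with h | h
  · have := two_mul_minFac_le_of_dvd_B hn (Nat.Odd.sub_odd hq_odd odd_one) (by omega) hq.ne_one
      hqn h
    omega
  · exact two_mul_minFac_le_of_dvd_B hn hq_odd.add_one (by omega) hq.ne_one hqn h

theorem six_pow_le_five_pow {n m : ℕ} (h : 9 * n ≤ 8 * m) : 6 ^ n ≤ 5 ^ m := by
  refine (Nat.pow_le_pow_iff_left (n := 8) (by norm_num)).mp ?_
  calc (6 ^ n) ^ 8 = (6 ^ 8) ^ n := by rw [← pow_mul, ← pow_mul, mul_comm]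
    _ ≤ (5 ^ 9) ^ n := Nat.pow_le_pow_left (by norm_num) n
    _ = 5 ^ (9 * n) := (pow_mul 5 9 n).symm
    _ ≤ 5 ^ (8 * m) := Nat.pow_le_pow_right (by norm_num) h
    _ = (5 ^ m) ^ 8 := by rw [← pow_mul, mul_comm]

theorem B_le_five_pow_mul_totient_of_odd {n : ℕ} (hn : Odd n) (h3 : 3 ≤ n) :
    B n ≤ 5 ^ (n - φ n) * φ (B n) := by
  set p := n.minFac with hp_def
  have hp : p.Prime := Nat.minFac_prime (by omega)
  have hp3 : 3 ≤ p := by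
    have := hp.two_le
    have : p ≠ 2 := fun h => by
      have h2 : p ∣ n := Nat.minFac_dvd n
      rw [h] at h2
      exact Nat.not_even_iff_odd.mpr hn (even_iff_two_dvd.mpr h2)
    omega
  have hfac : ∀ r ∈ (B n).primeFactors, 2 * p - 2 < r := fun r hr => by
    have := two_mul_minFac_le_of_prime_dvd_B hn (Nat.prime_of_mem_primeFactors hr)
      (Nat.dvd_of_mem_primeFactors hr)
    omega
  have hpow := Nat.pow_le_totient_pow_mul (B_pos (n := n) (by omega)).ne' (2 * p - 2)
  rw [Finset.filter_false_of_mem fun r hr => not_le.mpr (hfac r hr), Finset.prod_empty,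
    one_pow, mul_one] at hpow
  have hj : φ n * p ≤ n * (p - 1) := Nat.totient_mul_le_mul_sub_one hp (Nat.minFac_dvd n)
  have h6 : B n ≤ 5 ^ ((n - φ n) * (2 * p - 2)) :=
    (B_le_six_pow n).trans <| six_pow_le_five_pow <| by
      have hφ := Nat.totient_le n
      zify [hφ, show 2 ≤ 2 * p by omega, hp.one_le] at hj ⊢
      nlinarith [mul_nonneg (sub_nonneg.mpr (show (φ n : ℤ) ≤ n by exact_mod_cast hφ))
        (sub_nonneg.mpr (show (3 : ℤ) ≤ p by exact_mod_cast hp3))]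
  refine (Nat.pow_le_pow_iff_left (n := 2 * p - 2) (by omega)).mp ?_
  calc B n ^ (2 * p - 2) ≤ φ (B n) ^ (2 * p - 2) * B n := hpow
    _ ≤ φ (B n) ^ (2 * p - 2) * 5 ^ ((n - φ n) * (2 * p - 2)) := by gcongr
    _ = (5 ^ (n - φ n) * φ (B n)) ^ (2 * p - 2) := by ring

theorem B_le_five_pow_mul_totient_of_even {n : ℕ} (hn : Even n) (h4 : 4 ≤ n) :
    B n ≤ 5 ^ (n - φ n) * φ (B n) := by
  have hpow := Nat.pow_le_totient_pow_mul_primorial (B_pos (n := n) (by omega)).ne' 4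
  rw [show primorial 4 = 6 by decide] at hpow
  have hj : φ n * 2 ≤ n * (2 - 1) := Nat.totient_mul_le_mul_sub_one Nat.prime_two hn.two_dvd
  have h6 : B n * 6 ^ 3 ≤ 5 ^ ((n - φ n) * 4) := by
    calc B n * 6 ^ 3 ≤ 6 ^ n * 6 ^ 3 := by gcongr; exact B_le_six_pow n
      _ = 6 ^ (n + 3) := (pow_add 6 n 3).symm
      _ ≤ 5 ^ ((n - φ n) * 4) := six_pow_le_five_pow (by have := Nat.totient_le n; omega)
  refine (Nat.pow_le_pow_iff_left (n := 4) (by norm_num)).mp ?_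
  calc B n ^ 4 ≤ φ (B n) ^ 4 * B n * 6 ^ (4 - 1) := hpow
    _ ≤ φ (B n) ^ 4 * 5 ^ ((n - φ n) * 4) := by rw [mul_assoc]; gcongr
    _ = (5 ^ (n - φ n) * φ (B n)) ^ 4 := by ring

theorem B_le_five_pow_mul_totient {n : ℕ} (hn : 3 ≤ n) : B n ≤ 5 ^ (n - φ n) * φ (B n) := by
  rcases Nat.even_or_odd n with h | h
  · exact B_le_five_pow_mul_totient_of_even h (by obtain ⟨k, rfl⟩ := h; omega)
  · exact B_le_five_pow_mul_totient_of_odd h hn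

theorem stmt13 : ∀ n : ℕ, 1 ≤ n → B (Nat.totient n) ≤ Nat.totient (B n) := by
  intro n hn
  rcases lt_or_ge n 3 with h | h3
  · interval_cases n <;> decide
  have hgrowth := five_pow_mul_B_le (φ n) (n - φ n)
  rw [Nat.add_sub_cancel' (Nat.totient_le n)] at hgrowth
  exact Nat.le_of_mul_le_mul_left (hgrowth.trans (B_le_five_pow_mul_totient h3)) (by positivity)
end

section
/- Let n be an odd prime and let p be any prime dividing B_n. Then p ≡ 1 (mod n) or p ≡ -1 (mod n), and moreover p ≥ 2n - 1. -/
lemma B_le_B_succ (m : ℕ) : B m ≤ B (m + 1) := by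
  induction m with
  | zero => simp [B]
  | succ m ih =>
    show B (m + 1) ≤ 6 * B (m + 1) - B m
    omega

lemma B_add_two_add_B (m : ℕ) : B (m + 2) + B m = 6 * B (m + 1) := by
  have h : B (m + 2) = 6 * B (m + 1) - B m := rfl
  have := B_le_B_succ m
  omega

lemma B_mod_two_s14 (m : ℕ) : B m % 2 = m % 2 := by
  induction m using Nat.twoStepInduction with
  | zero => rfl
  | one => rfl
  | more m ih _ => have := B_add_two_add_B m; omega

section Binet

variable {R : Type*} [CommRing R] {s : R}

lemma three_add_two_mul_mul_three_sub_two_mul (hs : s ^ 2 = 2) :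
    (3 + 2 * s) * (3 - 2 * s) = 1 := by
  linear_combination (-4) * hs

lemma B_mul_four_mul_eq (hs : s ^ 2 = 2) (m : ℕ) :
    (B m : R) * (4 * s) = (3 + 2 * s) ^ m - (3 - 2 * s) ^ m := by
  induction m using Nat.twoStepInduction with
  | zero => simp [B]
  | one => simp [B]; ring
  | more m ih₀ ih₁ =>
    have hB : (B (m + 2) : R) + B m = 6 * B (m + 1) := by
      simpa using congrArg (Nat.cast : ℕ → R) (B_add_two_add_B m)
    linear_combination (4 * s) * hB + 6 * ih₁ - ih₀
      + ((3 - 2 * s) ^ m - (3 + 2 * s) ^ m) * (4 * hs)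

end Binet

lemma dvd_orderOf_of_pow_mul_eq_one {G : Type*} [Monoid G] {x : G} {m n : ℕ} (hn : n.Prime)
    (h : x ^ (m * n) = 1) (hm : x ^ m ≠ 1) : n ∣ orderOf x := by
  by_contra hnx
  have hcop : (orderOf x).Coprime n := Nat.coprime_comm.mp ((hn.coprime_iff_not_dvd).mpr hnx)
  exact hm (orderOf_dvd_iff_pow_eq_one.mp (hcop.dvd_of_dvd_mul_right (orderOf_dvd_of_pow_eq_one h)))

section Frobenius

variable {R : Type*} [CommRing R] (p : ℕ) [Fact p.Prime] [CharP R p] {s : R}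

lemma three_add_two_mul_sq_ne_one (hp : p ≠ 2) (hs : s ^ 2 = 2) : (3 + 2 * s) ^ 2 ≠ 1 := by
  intro h
  -- `α ^ 2 = 6α - 1`, so `α ^ 2 = 1` means `12s = -16`; squaring gives `288 = 256`.
  have h32 : ((2 ^ 5 : ℕ) : R) = 0 := by
    push_cast
    linear_combination (12 * s - 16) * h - (48 * s + 80) * hs
  rw [CharP.cast_eq_zero_iff R p] at h32
  exact hp ((Nat.prime_dvd_prime_iff_eq Fact.out Nat.prime_two).mp
    ((Fact.out : p.Prime).dvd_of_dvd_pow h32))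

variable [IsDomain R]

lemma pow_char_eq_or_eq_neg (hs : s ^ 2 = 2) : s ^ p = s ∨ s ^ p = -s := by
  rw [← sq_eq_sq_iff_eq_or_eq_neg, ← pow_mul, mul_comm, pow_mul, hs, ← frobenius_def, map_ofNat]

lemma three_add_two_mul_pow_char (hs : s ^ 2 = 2) :
    (3 + 2 * s) ^ p = 3 + 2 * s ∨ (3 + 2 * s) ^ p = 3 - 2 * s := by
  have hfrob : (3 + 2 * s) ^ p = 3 + 2 * s ^ p := by
    rw [← frobenius_def, map_add, map_mul, map_ofNat, map_ofNat, frobenius_def]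
  rcases pow_char_eq_or_eq_neg p hs with h | h
  · exact .inl (by rw [hfrob, h])
  · exact .inr (by rw [hfrob, h]; ring)

lemma three_add_two_mul_pow_sub_one_or_pow_add_one (hs : s ^ 2 = 2) :
    (3 + 2 * s) ^ (p - 1) = 1 ∨ (3 + 2 * s) ^ (p + 1) = 1 := by
  have hunit := three_add_two_mul_mul_three_sub_two_mul hs
  rcases three_add_two_mul_pow_char p hs with h | h
  · left
    have hne : (3 + 2 * s) ≠ 0 := left_ne_zero_of_mul_eq_one hunit
    refine mul_right_cancel₀ hne ?_
    rw [pow_sub_one_mul (Fact.out : p.Prime).ne_zero, h, one_mul]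
  · right
    rw [pow_succ, h, mul_comm, hunit]

end Frobenius

theorem Nat.Prime.dvd_sub_one_or_dvd_add_one_of_dvd_B {n p : ℕ} (hn : n.Prime) (hp : p.Prime)
    (hp2 : p ≠ 2) (h : p ∣ B n) : n ∣ p - 1 ∨ n ∣ p + 1 := by
  have := Fact.mk hp
  obtain ⟨s, hs⟩ := IsAlgClosed.exists_pow_nat_eq (2 : AlgebraicClosure (ZMod p)) two_pos
  have hBn : (B n : AlgebraicClosure (ZMod p)) = 0 := (CharP.cast_eq_zero_iff _ p _).mpr h
  have hpow : (3 + 2 * s) ^ n = (3 - 2 * s) ^ n := by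
    have := B_mul_four_mul_eq hs n
    rw [hBn, zero_mul] at this
    exact sub_eq_zero.mp this.symm
  have hpow_two_mul : (3 + 2 * s) ^ (2 * n) = 1 := by
    rw [Nat.two_mul, pow_add]
    nth_rewrite 2 [hpow]
    rw [← mul_pow, three_add_two_mul_mul_three_sub_two_mul hs, one_pow]
  have hnα := dvd_orderOf_of_pow_mul_eq_one hn hpow_two_mul (three_add_two_mul_sq_ne_one p hp2 hs)
  rcases three_add_two_mul_pow_sub_one_or_pow_add_one p hs with h | h
  · exact .inl (hnα.trans (orderOf_dvd_of_pow_eq_one h))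
  · exact .inr (hnα.trans (orderOf_dvd_of_pow_eq_one h))

lemma Nat.mod_eq_one_or_mod_eq_sub_one_of_dvd {n p : ℕ} (hn : 2 ≤ n) (hp : 1 ≤ p)
    (h : n ∣ p - 1 ∨ n ∣ p + 1) : p % n = 1 ∨ p % n = n - 1 := by
  rcases h with h | h
  · left
    have hmod : 1 ≡ p [MOD n] := (Nat.modEq_iff_dvd' hp).mpr h
    rw [← hmod, Nat.mod_eq_of_lt hn]
  · right
    have hmod : p + 1 ≡ n - 1 + 1 [MOD n] := by
      rw [Nat.sub_add_cancel (by omega)]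
      exact (Nat.modEq_zero_iff_dvd.mpr h).trans (Nat.modEq_zero_iff_dvd.mpr dvd_rfl).symm
    rw [Nat.ModEq.add_right_cancel' 1 hmod, Nat.mod_eq_of_lt (by omega)]

lemma Nat.two_mul_sub_one_le_of_dvd {n p : ℕ} (hn : Odd n) (hp : Odd p) (hp1 : p ≠ 1)
    (h : n ∣ p - 1 ∨ n ∣ p + 1) : 2 * n - 1 ≤ p := by
  rw [Nat.odd_iff] at hn hp
  rcases h with ⟨k, hk⟩ | ⟨k, hk⟩ <;>
  · have hk2 : 2 ≤ k := by
      by_contra! hk'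
      interval_cases k <;> omega
    have := Nat.mul_le_mul_left n hk2
    omega

theorem stmt14 : ∀ n p : ℕ, n.Prime → Odd n → p.Prime → p ∣ B n →
    (p % n = 1 ∨ p % n = n - 1) ∧ 2 * n - 1 ≤ p := by
  intro n p hn hn_odd hp hpB
  have hB_odd : Odd (B n) := Nat.odd_iff.mpr ((B_mod_two_s14 n).trans (Nat.odd_iff.mp hn_odd))
  have hp2 : p ≠ 2 := by
    rintro rfl
    exact hB_odd.not_two_dvd_nat hpB
  have hdvd := hn.dvd_sub_one_or_dvd_add_one_of_dvd_B hp hp2 hpB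
  exact ⟨Nat.mod_eq_one_or_mod_eq_sub_one_of_dvd hn.two_le hp.pos hdvd,
    Nat.two_mul_sub_one_le_of_dvd hn_odd (hp.odd_of_ne_two hp2) hp.ne_one hdvd⟩
end
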